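/- arXiv:2305.11593 — 6 statements merged into one kernel-verified Lean document; each statement's English description precedes it below -/
import Mathlib

section
/- Let X be a Banach space, Y a subprojective Banach space, T : X → Y a bounded operator, and M a closed infinite-dimensional subspace of X such that the restriction T|_M is not strictly singular. Then M contains an infinite-dimensional closed subspace that is complemented in X. -/
/-- A Banach space is subprojective if every closed infinite-dimensional subspace
contains an infinite-dimensional closed subspace complemented in the whole space. -/
def Subprojective (Y : Type*) [NormedAddCommGroup Y] [NormedSpace ℝ Y] : Prop :=
  ∀ M : Submodule ℝ Y, IsClosed (M : Set Y) → ¬FiniteDimensional ℝ M →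
    ∃ N : Submodule ℝ Y, N ≤ M ∧ IsClosed (N : Set Y) ∧ ¬FiniteDimensional ℝ N ∧
      N.ClosedComplemented

/-- A linear map is strictly singular if it is an isomorphism (bounded below)
on no closed infinite-dimensional subspace. -/
def StrictlySingular {X Y : Type*} [NormedAddCommGroup X] [NormedSpace ℝ X]
    [NormedAddCommGroup Y] [NormedSpace ℝ Y] (T : X →ₗ[ℝ] Y) : Prop :=
  ∀ N : Submodule ℝ X, IsClosed (N : Set X) → ¬FiniteDimensional ℝ N →
    ¬∃ c : ℝ, 0 < c ∧ ∀ x ∈ N, c * ‖x‖ ≤ ‖T x‖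

/-!
If `T` is bounded below by `c > 0` on a closed subspace `N`, then `T` maps `N` isomorphically
onto the closed subspace `T N`, with inverse of norm at most `c⁻¹`. Subprojectivity of `Y` gives
an infinite-dimensional `W ≤ T N` with a projection `P : Y → W`, and with `N' = N ∩ T⁻¹ W` the
map `(T|_{N'})⁻¹ ∘ P ∘ T` is a bounded projection of `X` onto `N' ≤ M`.
-/

section

variable {𝕜 X Y : Type*} [NontriviallyNormedField 𝕜] [NormedAddCommGroup X] [NormedSpace 𝕜 X]
  [NormedAddCommGroup Y] [NormedSpace 𝕜 Y]

namespace ContinuousLinearMap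

variable (T : X →L[𝕜] Y) {N : Submodule 𝕜 X} {c : ℝ}

theorem norm_le_inv_mul_of_bound (hc : 0 < c) (hT : ∀ x ∈ N, c * ‖x‖ ≤ ‖T x‖) (x : N) :
    ‖x‖ ≤ c⁻¹ * ‖T x‖ :=
  (le_inv_mul_iff₀ hc).2 (hT x x.2)

theorem injective_submoduleMap_of_bound (hc : 0 < c) (hT : ∀ x ∈ N, c * ‖x‖ ≤ ‖T x‖) :
    Function.Injective ((T : X →ₗ[𝕜] Y).submoduleMap N) := by
  refine (injective_iff_map_eq_zero _).2 fun x hx => ?_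
  have hTx : T x = 0 := congrArg Subtype.val hx
  simpa [hTx] using T.norm_le_inv_mul_of_bound hc hT x

noncomputable def equivMapOfBound (hc : 0 < c) (hT : ∀ x ∈ N, c * ‖x‖ ≤ ‖T x‖) :
    N ≃L[𝕜] N.map (T : X →ₗ[𝕜] Y) :=
  let e := LinearEquiv.ofBijective _ ⟨T.injective_submoduleMap_of_bound hc hT,
    LinearMap.submoduleMap_surjective _ _⟩
  e.toContinuousLinearEquivOfBounds ‖T‖ c⁻¹ (fun x => T.le_opNorm x) fun y =>
    (T.norm_le_inv_mul_of_bound hc hT (e.symm y)).trans_eq <|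
      congrArg (fun z : Y => c⁻¹ * ‖z‖) (congrArg Subtype.val (e.apply_symm_apply y))

theorem isClosed_map_of_bound [CompleteSpace X] (hN : IsClosed (N : Set X)) (hc : 0 < c)
    (hT : ∀ x ∈ N, c * ‖x‖ ≤ ‖T x‖) : IsClosed (N.map (T : X →ₗ[𝕜] Y) : Set Y) := by
  have : CompleteSpace N := hN.completeSpace_coe
  have : CompleteSpace (N.map (T : X →ₗ[𝕜] Y)) :=
    let e := T.equivMapOfBound hc hT
    (e.isUniformEmbedding.completeSpace_congr e.surjective).1 this
  exact (completeSpace_coe_iff_isComplete.1 this).isClosed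

theorem not_finiteDimensional_map_of_bound (hc : 0 < c) (hT : ∀ x ∈ N, c * ‖x‖ ≤ ‖T x‖)
    (hN : ¬FiniteDimensional 𝕜 N) : ¬FiniteDimensional 𝕜 (N.map (T : X →ₗ[𝕜] Y)) :=
  fun _ => hN (Module.Finite.equiv (T.equivMapOfBound hc hT).symm.toLinearEquiv)

theorem closedComplemented_of_map_of_bound (hc : 0 < c) (hT : ∀ x ∈ N, c * ‖x‖ ≤ ‖T x‖)
    (h : (N.map (T : X →ₗ[𝕜] Y)).ClosedComplemented) : N.ClosedComplemented := by
  obtain ⟨P, hP⟩ := h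
  let e := T.equivMapOfBound hc hT
  refine ⟨(e.symm : _ →L[𝕜] N).comp (P.comp T), fun x => ?_⟩
  have hPT : P (T x) = e x := hP (e x)
  simp only [comp_apply, ContinuousLinearEquiv.coe_coe, hPT,
    ContinuousLinearEquiv.symm_apply_apply]

end ContinuousLinearMap

end

theorem stmt0_general {X Y : Type*} [NormedAddCommGroup X] [NormedSpace ℝ X] [CompleteSpace X]
    [NormedAddCommGroup Y] [NormedSpace ℝ Y]
    (hY : Subprojective Y) (T : X →L[ℝ] Y)
    (M : Submodule ℝ X)
    (hTM : ∃ N : Submodule ℝ X, N ≤ M ∧ IsClosed (N : Set X) ∧ ¬FiniteDimensional ℝ N ∧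
      ∃ c : ℝ, 0 < c ∧ ∀ x ∈ N, c * ‖x‖ ≤ ‖T x‖) :
    ∃ N : Submodule ℝ X, N ≤ M ∧ IsClosed (N : Set X) ∧ ¬FiniteDimensional ℝ N ∧
      N.ClosedComplemented := by
  obtain ⟨N, hNM, hNc, hNd, c, hc, hT⟩ := hTM
  obtain ⟨W, hWN, -, hWd, hWP⟩ := hY _ (T.isClosed_map_of_bound hNc hc hT)
    (T.not_finiteDimensional_map_of_bound hc hT hNd)
  set N' := N ⊓ W.comap (T : X →ₗ[ℝ] Y)
  have hN'N : N' ≤ N := inf_le_left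
  have hTN' : N'.map (T : X →ₗ[ℝ] Y) = W :=
    Submodule.map_inf_eq_map_inf_comap.symm.trans (inf_eq_right.2 hWN)
  have hN'P : N'.ClosedComplemented :=
    T.closedComplemented_of_map_of_bound hc (fun x hx => hT x (hN'N hx)) (hTN' ▸ hWP)
  refine ⟨N', hN'N.trans hNM, hN'P.isClosed, fun _ => hWd ?_, hN'P⟩
  rw [← hTN']
  infer_instance

/-- if `Y` is subprojective, `T : X → Y` is a bounded operator and `M` is a
closed infinite-dimensional subspace of `X` on which `T` is not strictly singular
(i.e. `T` is bounded below on some closed infinite-dimensional subspace of `M`),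
then `M` contains an infinite-dimensional closed subspace complemented in `X`. -/
theorem stmt0 {X Y : Type*} [NormedAddCommGroup X] [NormedSpace ℝ X] [CompleteSpace X]
    [NormedAddCommGroup Y] [NormedSpace ℝ Y] [CompleteSpace Y]
    (hY : Subprojective Y) (T : X →L[ℝ] Y)
    (M : Submodule ℝ X) (hMc : IsClosed (M : Set X)) (hMd : ¬FiniteDimensional ℝ M)
    (hTM : ∃ N : Submodule ℝ X, N ≤ M ∧ IsClosed (N : Set X) ∧ ¬FiniteDimensional ℝ N ∧
      ∃ c : ℝ, 0 < c ∧ ∀ x ∈ N, c * ‖x‖ ≤ ‖T x‖) :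
    ∃ N : Submodule ℝ X, N ≤ M ∧ IsClosed (N : Set X) ∧ ¬FiniteDimensional ℝ N ∧
      N.ClosedComplemented :=
  stmt0_general hY T M hTM
end

section
/- Let X be a Banach space and let M, N be closed subspaces of X such that M ∩ N = {0} and M + N is not closed. Then there exists a bounded linear automorphism U of X such that U(M) ∩ N is infinite-dimensional. -/
/-
If `M + N` is not closed, unit vectors of `M` come arbitrarily close to `N`, and this persists
after passing to a closed subspace of `M` of finite codimension, since adding a
finite-dimensional space to a closed one keeps it closed. Inductively this yields a biorthogonal
system `(xₙ, fₙ)` with `xₙ ∈ M` and points `yₙ ∈ N` such that `∑ ‖fₙ‖ ‖yₙ - xₙ‖ < 1`. Then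
`U = 1 + ∑ fₙ ⊗ (yₙ - xₙ)` is invertible by the Neumann series and maps `xₙ` to `yₙ`, so `U(M) ∩ N`
contains the linearly independent family `(yₙ)`.
-/

open Function

theorem exists_seq_of_forall_fin_exists {α : Type*} (P : ℕ → α → Prop) (r : α → α → Prop)
    [hr : Std.Symm r]
    (h : ∀ n (t : Fin n → α), (∀ i : Fin n, P i (t i)) → Pairwise (r on t) →
      ∃ a, P n a ∧ ∀ i, r (t i) a) :
    ∃ s : ℕ → α, (∀ n, P n (s n)) ∧ Pairwise (r on s) := by
  classical
  obtain ⟨a₀, -⟩ := h 0 Fin.elim0 (fun i => i.elim0) (fun i => i.elim0)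
  let next (n : ℕ) (t : Fin n → α) : α :=
    if H : (∀ i : Fin n, P i (t i)) ∧ Pairwise (r on t) then (h n t H.1 H.2).choose else a₀
  let s : ℕ → α := Nat.strongRec fun n s => next n fun i => s i i.2
  have pairwise_of_lt {n : ℕ} (hlt : ∀ m < n, ∀ k < m, r (s k) (s m)) :
      Pairwise (r on fun i : Fin n => s i) := fun i j hij =>
    (lt_or_gt_of_ne hij).elim (fun h => hlt j j.2 i h) (fun h => symm (hlt i i.2 j h))
  have key (n : ℕ) : P n (s n) ∧ ∀ k < n, r (s k) (s n) := by
    induction n using Nat.strong_induction_on with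
    | _ n ih =>
      have H : (∀ i : Fin n, P i (s i)) ∧ Pairwise (r on fun i : Fin n => s i) :=
        ⟨fun i => (ih i i.2).1, pairwise_of_lt fun m hm => (ih m hm).2⟩
      have hsn : s n = (h n _ H.1 H.2).choose := by
        rw [show s n = next n fun i : Fin n => s i from Nat.strongRec_eq _ n]
        exact dif_pos H
      obtain ⟨hPn, hrn⟩ := (h n _ H.1 H.2).choose_spec
      exact ⟨hsn ▸ hPn, fun k hk => hsn ▸ hrn ⟨k, hk⟩⟩
  exact ⟨s, fun n => (key n).1, fun m n hmn => (lt_or_gt_of_ne hmn).elim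
    (fun h => (key n).2 m h) (fun h => symm ((key m).2 n h))⟩

namespace Submodule

variable {𝕜 X : Type*} [RCLike 𝕜] [NormedAddCommGroup X] [NormedSpace 𝕜 X] [CompleteSpace X]
  {A B : Submodule 𝕜 X}

theorem isClosed_sup_of_mul_norm_le_norm_sub (hA : IsClosed (A : Set X))
    (hB : IsClosed (B : Set X)) {c : ℝ} (hc : 0 < c)
    (h : ∀ a ∈ A, ∀ b ∈ B, c * ‖a‖ ≤ ‖a - b‖) : IsClosed ((A ⊔ B : Submodule 𝕜 X) : Set X) := by
  have : CompleteSpace A := hA.isComplete.completeSpace_coe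
  have : CompleteSpace B := hB.isComplete.completeSpace_coe
  let T : A × B →L[𝕜] X := A.subtypeL.coprod B.subtypeL
  have hT : AntilipschitzWith ⟨1 + c⁻¹, by positivity⟩ T := by
    refine T.antilipschitz_of_bound fun ⟨a, b⟩ => ?_
    have ha : ‖(a : X)‖ ≤ c⁻¹ * ‖(a : X) + b‖ := by
      rw [le_inv_mul_iff₀ hc]
      simpa using h a a.2 (-b) (neg_mem b.2)
    have hb : ‖(b : X)‖ ≤ ‖(a : X) + b‖ + ‖(a : X)‖ := by
      simpa using norm_sub_le ((a : X) + b) a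
    change max ‖(a : X)‖ ‖(b : X)‖ ≤ (1 + c⁻¹) * ‖(a : X) + b‖
    have := norm_nonneg ((a : X) + b)
    exact max_le (by nlinarith) (by nlinarith)
  have hrange : Set.range T = (A ⊔ B : Submodule 𝕜 X) := by
    rw [← ContinuousLinearMap.coe_coe, ← LinearMap.coe_range, ContinuousLinearMap.range_coprod]
    simp
  exact hrange ▸ hT.isClosed_range T.uniformContinuous

theorem exists_norm_eq_one_norm_sub_lt_of_not_isClosed_sup (hA : IsClosed (A : Set X))
    (hB : IsClosed (B : Set X)) (h : ¬IsClosed ((A ⊔ B : Submodule 𝕜 X) : Set X)) {ε : ℝ}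
    (hε : 0 < ε) : ∃ a ∈ A, ‖a‖ = 1 ∧ ∃ b ∈ B, ‖a - b‖ < ε := by
  by_contra! hgap
  refine h (isClosed_sup_of_mul_norm_le_norm_sub hA hB hε fun a ha b hb => ?_)
  rcases eq_or_ne a 0 with rfl | ha0
  · simp
  have hscale := hgap _ (A.smul_mem (‖a‖⁻¹ : 𝕜) ha) (norm_smul_inv_norm ha0) _
    (B.smul_mem (‖a‖⁻¹ : 𝕜) hb)
  rwa [← smul_sub, norm_smul, norm_inv, RCLike.norm_ofReal, abs_norm,
    le_inv_mul_iff₀ (norm_pos_iff.2 ha0), mul_comm] at hscale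

end Submodule

section Biorthogonal

variable {𝕜 X ι : Type*} [RCLike 𝕜] [NormedAddCommGroup X] [NormedSpace 𝕜 X] [Fintype ι]
  {x : ι → X} {f : ι → StrongDual 𝕜 X}

noncomputable def biorthogonalProj (x : ι → X) (f : ι → StrongDual 𝕜 X) : X →L[𝕜] X :=
  1 - ∑ i, (f i).smulRight (x i)

theorem biorthogonalProj_apply (z : X) : biorthogonalProj x f z = z - ∑ i, f i z • x i := by
  simp [biorthogonalProj]

theorem biorthogonalProj_apply_of_forall_eq_zero {z : X} (hz : ∀ i, f i z = 0) :
    biorthogonalProj x f z = z := by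
  simp [biorthogonalProj_apply, hz]

theorem sub_biorthogonalProj_mem_span (z : X) :
    z - biorthogonalProj x f z ∈ Submodule.span 𝕜 (Set.range x) := by
  rw [biorthogonalProj_apply, sub_sub_cancel]
  exact Submodule.sum_mem _ fun i _ => Submodule.smul_mem _ _ (Submodule.subset_span ⟨i, rfl⟩)

theorem apply_biorthogonalProj (h0 : Pairwise fun i j => f i (x j) = 0) (h1 : ∀ i, f i (x i) = 1)
    (z : X) (j : ι) : f j (biorthogonalProj x f z) = 0 := by
  rw [biorthogonalProj_apply, map_sub, map_sum, Finset.sum_eq_single j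
    (fun i _ hij => by simp [h0 hij.symm]) (by simp), map_smul, h1, smul_eq_mul, mul_one, sub_self]

theorem biorthogonalProj_apply_self (h0 : Pairwise fun i j => f i (x j) = 0)
    (h1 : ∀ i, f i (x i) = 1) (j : ι) : biorthogonalProj x f (x j) = 0 := by
  rw [biorthogonalProj_apply, sub_eq_zero, Finset.sum_eq_single j
    (fun i _ hij => by simp [h0 hij]) (by simp), h1, one_smul]

theorem not_isClosed_inf_iInf_ker_sup (h0 : Pairwise fun i j => f i (x j) = 0)
    (h1 : ∀ i, f i (x i) = 1) {M N : Submodule 𝕜 X} (hxM : ∀ i, x i ∈ M)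
    (hMN : ¬IsClosed ((M ⊔ N : Submodule 𝕜 X) : Set X)) :
    ¬IsClosed (((M ⊓ ⨅ i, (f i).ker) ⊔ N : Submodule 𝕜 X) : Set X) := by
  intro hclosed
  have hspan : Submodule.span 𝕜 (Set.range x) ≤ M :=
    Submodule.span_le.2 (Set.range_subset_iff.2 hxM)
  have hdecomp : M ⊔ N = (M ⊓ ⨅ i, (f i).ker) ⊔ N ⊔ Submodule.span 𝕜 (Set.range x) := by
    refine le_antisymm (sup_le (fun z hz => ?_) (le_sup_right.trans le_sup_left))
      (sup_le (sup_le (inf_le_left.trans le_sup_left) le_sup_right) (hspan.trans le_sup_left))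
    have hPz : biorthogonalProj x f z ∈ M ⊓ ⨅ i, (f i).ker := by
      refine ⟨?_, Submodule.mem_iInf _ |>.2 fun i => apply_biorthogonalProj h0 h1 z i⟩
      simpa using M.sub_mem hz (hspan (sub_biorthogonalProj_mem_span z))
    rw [← add_sub_cancel (biorthogonalProj x f z) z]
    exact Submodule.add_mem_sup (Submodule.mem_sup_left hPz) (sub_biorthogonalProj_mem_span z)
  have := FiniteDimensional.span_of_finite 𝕜 (Set.finite_range x)
  exact hMN (hdecomp ▸ Submodule.isClosed_sup_finiteDimensional _ _ hclosed)

theorem exists_extend_biorthogonal_of_not_isClosed_sup [CompleteSpace X]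
    (h0 : Pairwise fun i j => f i (x j) = 0) (h1 : ∀ i, f i (x i) = 1) {M N : Submodule 𝕜 X}
    (hM : IsClosed (M : Set X)) (hN : IsClosed (N : Set X))
    (hMN : ¬IsClosed ((M ⊔ N : Submodule 𝕜 X) : Set X)) (hxM : ∀ i, x i ∈ M) {δ : ℝ}
    (hδ : 0 < δ) :
    ∃ x' ∈ M, ∃ f' : StrongDual 𝕜 X, f' x' = 1 ∧ (∀ i, f i x' = 0) ∧ (∀ i, f' (x i) = 0) ∧
      ∃ y' ∈ N, ‖f'‖ * ‖y' - x'‖ < δ := by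
  set P := biorthogonalProj x f
  have hA : IsClosed ((M ⊓ ⨅ i, (f i).ker : Submodule 𝕜 X) : Set X) := by
    simpa using hM.inter (isClosed_iInter fun i => (f i).isClosed_ker)
  -- `f' = g ∘ P` will have norm at most `‖P‖`, a bound fixed before `x'` is chosen.
  obtain ⟨x', hx'A, hx'1, y', hy', hxy⟩ :=
    Submodule.exists_norm_eq_one_norm_sub_lt_of_not_isClosed_sup hA hN
      (not_isClosed_inf_iInf_ker_sup h0 h1 hxM hMN) (show 0 < δ / (‖P‖ + 1) by positivity)
  obtain ⟨hx'M, hx'ker⟩ := Submodule.mem_inf.1 hx'A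
  replace hx'ker : ∀ i, f i x' = 0 := by simpa using hx'ker
  obtain ⟨g, hg1, hgx⟩ := exists_dual_vector 𝕜 x' (by simp [hx'1])
  refine ⟨x', hx'M, g.comp P, ?_, hx'ker, fun i => by simp [P, biorthogonalProj_apply_self h0 h1],
    y', hy', ?_⟩
  · simp [P, biorthogonalProj_apply_of_forall_eq_zero hx'ker, hgx, hx'1]
  calc ‖g.comp P‖ * ‖y' - x'‖ ≤ ‖P‖ * (δ / (‖P‖ + 1)) := by
        refine mul_le_mul ?_ (norm_sub_rev y' x' ▸ hxy.le) (norm_nonneg _) (norm_nonneg _)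
        simpa [hg1] using g.opNorm_comp_le P
    _ < δ := by
        rw [mul_div_assoc', div_lt_iff₀ (by positivity)]
        nlinarith

end Biorthogonal

section

variable {𝕜 X : Type*} [RCLike 𝕜] [NormedAddCommGroup X] [NormedSpace 𝕜 X] [CompleteSpace X]

theorem exists_biorthogonal_seq_of_not_isClosed_sup {M N : Submodule 𝕜 X}
    (hM : IsClosed (M : Set X)) (hN : IsClosed (N : Set X))
    (hMN : ¬IsClosed ((M ⊔ N : Submodule 𝕜 X) : Set X)) {δ : ℕ → ℝ} (hδ : ∀ n, 0 < δ n) :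
    ∃ (x y : ℕ → X) (f : ℕ → StrongDual 𝕜 X), (∀ n, x n ∈ M) ∧ (∀ n, y n ∈ N) ∧
      (Pairwise fun i j => f i (x j) = 0) ∧ (∀ n, f n (x n) = 1) ∧
      ∀ n, ‖f n‖ * ‖y n - x n‖ < δ n := by
  obtain ⟨s, hs, hs_pair⟩ := exists_seq_of_forall_fin_exists
    (fun n (p : X × StrongDual 𝕜 X) => p.1 ∈ M ∧ p.2 p.1 = 1 ∧ ∃ y ∈ N, ‖p.2‖ * ‖y - p.1‖ < δ n)
    (fun p q => p.2 q.1 = 0 ∧ q.2 p.1 = 0) (hr := ⟨fun _ _ h => h.symm⟩) fun n t ht ht_pair => by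
      obtain ⟨x', hx'M, f', hf'x', hx'ker, hf'ker, hnear⟩ :=
        exists_extend_biorthogonal_of_not_isClosed_sup (x := fun i => (t i).1)
          (f := fun i => (t i).2) (fun i j hij => (ht_pair hij).1) (fun i => (ht i).2.1) hM hN hMN
          (fun i => (ht i).1) (hδ n)
      exact ⟨(x', f'), ⟨hx'M, hf'x', hnear⟩, fun i => ⟨hx'ker i, hf'ker i⟩⟩
  choose y hyN hnear using fun n => (hs n).2.2
  exact ⟨fun n => (s n).1, y, fun n => (s n).2, fun n => (hs n).1, hyN,
    fun i j hij => (hs_pair hij).1, fun n => (hs n).2.1, hnear⟩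

theorem exists_continuousLinearEquiv_apply_eq_of_biorthogonal {ι : Type*} {x y : ι → X}
    {f : ι → StrongDual 𝕜 X} (h0 : Pairwise fun i j => f i (x j) = 0) (h1 : ∀ i, f i (x i) = 1)
    (hsum : Summable fun i => ‖f i‖ * ‖y i - x i‖) (hlt : ∑' i, ‖f i‖ * ‖y i - x i‖ < 1) :
    ∃ U : X ≃L[𝕜] X, ∀ i, U (x i) = y i := by
  set K : X →L[𝕜] X := ∑' i, (f i).smulRight (y i - x i)
  have hnorm (i : ι) : ‖(f i).smulRight (y i - x i)‖ = ‖f i‖ * ‖y i - x i‖ :=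
    ContinuousLinearMap.norm_smulRight_apply _ _
  have hK : Summable fun i => (f i).smulRight (y i - x i) :=
    Summable.of_norm (by simpa only [hnorm] using hsum)
  have hKx (j : ι) : K (x j) = y j - x j := by
    have hmap := (ContinuousLinearMap.apply 𝕜 X (x j)).map_tsum hK
    simp only [ContinuousLinearMap.apply_apply] at hmap
    rw [hmap, tsum_eq_single j (fun i hij => by simp [h0 hij])]
    simp [h1]
  have hKlt : ‖-K‖ < 1 := by
    rw [norm_neg]
    exact (norm_tsum_le_tsum_norm (by simpa only [hnorm] using hsum)).trans_lt
      (by simpa only [hnorm] using hlt)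
  refine ⟨ContinuousLinearEquiv.unitsEquiv 𝕜 X (Units.oneSub (-K) hKlt), fun j => ?_⟩
  simp [hKx]

end

theorem stmt1_general {X : Type*} [NormedAddCommGroup X] [NormedSpace ℝ X] [CompleteSpace X]
    (M N : Submodule ℝ X) (hMc : IsClosed (M : Set X)) (hNc : IsClosed (N : Set X))
    (hsum : ¬IsClosed ((M ⊔ N : Submodule ℝ X) : Set X)) :
    ∃ U : X ≃L[ℝ] X,
      ¬FiniteDimensional ℝ ↥(M.map ((U : X →L[ℝ] X) : X →ₗ[ℝ] X) ⊓ N) := by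
  have hδ : Summable fun n : ℕ => (1 / 2 : ℝ) ^ n / 4 := summable_geometric_two.div_const 4
  obtain ⟨x, y, f, hxM, hyN, h0, h1, hnear⟩ :=
    exists_biorthogonal_seq_of_not_isClosed_sup hMc hNc hsum (δ := fun n => (1 / 2 : ℝ) ^ n / 4)
      fun n => by positivity
  have hsummable : Summable fun n => ‖f n‖ * ‖y n - x n‖ :=
    hδ.of_nonneg_of_le (fun n => by positivity) fun n => (hnear n).le
  obtain ⟨U, hU⟩ := exists_continuousLinearEquiv_apply_eq_of_biorthogonal h0 h1 hsummable <|
    calc ∑' n, ‖f n‖ * ‖y n - x n‖ ≤ ∑' n : ℕ, (1 / 2 : ℝ) ^ n / 4 :=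
          hsummable.tsum_le_tsum (fun n => (hnear n).le) hδ
      _ < 1 := by rw [tsum_div_const, tsum_geometric_two]; norm_num
  refine ⟨U, fun hfin => ?_⟩
  have hy : LinearIndependent ℝ y := by
    have hx := LinearIndependent.of_pairwise_dual_eq_zero_one x (fun n => (f n : X →ₗ[ℝ] ℝ)) h0 h1
    simpa [comp_def, hU] using hx.map' _ U.toLinearEquiv.ker
  let z (n : ℕ) : ↥(M.map ((U : X →L[ℝ] X) : X →ₗ[ℝ] X) ⊓ N) := ⟨y n, ⟨x n, hxM n, hU n⟩, hyN n⟩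
  exact Module.Finite.not_linearIndependent_of_infinite z (.of_comp (Submodule.subtype _) hy)

/-- if `M`, `N` are closed subspaces of a Banach space `X` with
`M ∩ N = 0` and `M + N` not closed, there is an automorphism `U` of `X` such that
`U(M) ∩ N` is infinite-dimensional. -/
theorem stmt1 {X : Type*} [NormedAddCommGroup X] [NormedSpace ℝ X] [CompleteSpace X]
    (M N : Submodule ℝ X) (hMc : IsClosed (M : Set X)) (hNc : IsClosed (N : Set X))
    (hMN : M ⊓ N = ⊥) (hsum : ¬IsClosed ((M ⊔ N : Submodule ℝ X) : Set X)) :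
    ∃ U : X ≃L[ℝ] X,
      ¬FiniteDimensional ℝ ↥(M.map ((U : X →L[ℝ] X) : X →ₗ[ℝ] X) ⊓ N) :=
  stmt1_general M N hMc hNc hsum
end

section
/- Let X be a Banach space, (x_n) a bounded sequence in X, and (x_n*) a sequence in X* such that ⟨x_i*, x_j⟩ = δ_{ij} for all i, j and Σ_n ‖x_n*‖·‖x_n − y_n‖ < 1 for some sequence (y_n) in X. Then the map K(x) = Σ_n ⟨x_n*, x⟩ (x_n − y_n) defines a bounded operator on X with ‖K‖ < 1, and U = I − K is an automorphism of X with U(x_n) = y_n for every n. -/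
/-!
Since `‖x_n* ⊗ (x_n - y_n)‖ = ‖x_n*‖ ‖x_n - y_n‖`, the series `K = Σ_n x_n* ⊗ (x_n - y_n)` of
rank-one operators converges absolutely in operator norm, with `‖K‖ ≤ Σ_n ‖x_n*‖ ‖x_n - y_n‖ < 1`,
so `I - K` is invertible by the Neumann series. Biorthogonality collapses `K x_j` to its `j`-th
term `x_j - y_j`, whence `(I - K) x_j = y_j`.
-/

open ContinuousLinearMap

section RankOneSeries

variable {𝕜 E F ι : Type*} [NontriviallyNormedField 𝕜] [NormedAddCommGroup E] [NormedSpace 𝕜 E]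
  [NormedAddCommGroup F] [NormedSpace 𝕜 F] {f : ι → StrongDual 𝕜 E} {v : ι → F}

theorem summable_norm_smulRight (h : Summable fun n => ‖f n‖ * ‖v n‖) :
    Summable fun n => ‖(f n).smulRight (v n)‖ := by
  simpa only [norm_smulRight_apply] using h

theorem tsum_smulRight_apply [CompleteSpace F] (h : Summable fun n => ‖f n‖ * ‖v n‖) (z : E) :
    (∑' n, (f n).smulRight (v n)) z = ∑' n, f n z • v n :=
  ((summable_norm_smulRight h).of_norm.hasSum.mapL (apply 𝕜 F z)).tsum_eq.symm

theorem norm_tsum_smulRight_le [CompleteSpace F] (h : Summable fun n => ‖f n‖ * ‖v n‖) :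
    ‖∑' n, (f n).smulRight (v n)‖ ≤ ∑' n, ‖f n‖ * ‖v n‖ :=
  calc ‖∑' n, (f n).smulRight (v n)‖ ≤ ∑' n, ‖(f n).smulRight (v n)‖ :=
        norm_tsum_le_tsum_norm (summable_norm_smulRight h)
    _ = ∑' n, ‖f n‖ * ‖v n‖ := tsum_congr fun _ => norm_smulRight_apply _ _

theorem tsum_smulRight_apply_of_biorthogonal [CompleteSpace F] [DecidableEq ι] {x : ι → E}
    (hδ : ∀ i j, f i (x j) = if i = j then 1 else 0)
    (h : Summable fun n => ‖f n‖ * ‖v n‖) (j : ι) :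
    (∑' n, (f n).smulRight (v n)) (x j) = v j := by
  rw [tsum_smulRight_apply h, tsum_eq_single j fun i hij => by simp [hδ, hij]]
  simp [hδ]

theorem ContinuousLinearEquiv.exists_apply_eq_sub_of_norm_lt_one [CompleteSpace E]
    {K : E →L[𝕜] E} (hK : ‖K‖ < 1) : ∃ U : E ≃L[𝕜] E, ∀ z, U z = z - K z :=
  ⟨.ofUnit (Units.oneSub K hK), fun _ => rfl⟩

end RankOneSeries

theorem stmt3_general {X : Type*} [NormedAddCommGroup X] [NormedSpace ℝ X] [CompleteSpace X]
    (x y : ℕ → X)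
    (f : ℕ → X →L[ℝ] ℝ)
    (hδ : ∀ i j, f i (x j) = if i = j then (1 : ℝ) else 0)
    (hsum : Summable fun n => ‖f n‖ * ‖x n - y n‖)
    (hlt : (∑' n, ‖f n‖ * ‖x n - y n‖) < 1) :
    ∃ K : X →L[ℝ] X, (∀ z, K z = ∑' n, f n z • (x n - y n)) ∧ ‖K‖ < 1 ∧
      ∃ U : X ≃L[ℝ] X, (∀ z, U z = z - K z) ∧ ∀ n, U (x n) = y n := by
  set K := ∑' n, (f n).smulRight (x n - y n)
  have hKlt : ‖K‖ < 1 := (norm_tsum_smulRight_le hsum).trans_lt hlt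
  obtain ⟨U, hU⟩ := ContinuousLinearEquiv.exists_apply_eq_sub_of_norm_lt_one hKlt
  refine ⟨K, tsum_smulRight_apply hsum, hKlt, U, hU, fun n => ?_⟩
  rw [hU, tsum_smulRight_apply_of_biorthogonal hδ hsum, sub_sub_cancel]

/-- small perturbation principle. Given a bounded sequence `(x_n)`,
biorthogonal functionals `(x_n*)` and a sequence `(y_n)` with
`Σ ‖x_n*‖‖x_n - y_n‖ < 1`, the map `K(x) = Σ ⟨x_n*, x⟩ (x_n - y_n)` is a bounded
operator with `‖K‖ < 1` and `U = I - K` is an automorphism with `U(x_n) = y_n`. -/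
theorem stmt3 {X : Type*} [NormedAddCommGroup X] [NormedSpace ℝ X] [CompleteSpace X]
    (x y : ℕ → X) (hb : ∃ C : ℝ, ∀ n, ‖x n‖ ≤ C)
    (f : ℕ → X →L[ℝ] ℝ)
    (hδ : ∀ i j, f i (x j) = if i = j then (1 : ℝ) else 0)
    (hsum : Summable fun n => ‖f n‖ * ‖x n - y n‖)
    (hlt : (∑' n, ‖f n‖ * ‖x n - y n‖) < 1) :
    ∃ K : X →L[ℝ] X, (∀ z, K z = ∑' n, f n z • (x n - y n)) ∧ ‖K‖ < 1 ∧
      ∃ U : X ≃L[ℝ] X, (∀ z, U z = z - K z) ∧ ∀ n, U (x n) = y n :=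
  stmt3_general x y f hδ hsum hlt
end

section
/- Let I ⊆ ℕ be an interval, x = (x_n) ∈ Π with x_n = 0 for every n ∉ I, let m < min I, and let S be a finite nonempty subset of ℕ_0. Then ρ(x,S) ≤ ρ(x, {m} ∪ (S ∩ I)). -/
open Filter Topology

/-- Composition `φ_n^m = φ_{m-1} ∘ ⋯ ∘ φ_n : X n →L X m` (junk value for `m < n`). -/
noncomputable def phiTo {X : ℕ → Type*} [∀ n, NormedAddCommGroup (X n)]
    [∀ n, NormedSpace ℝ (X n)] (φ : ∀ n, X n →L[ℝ] X (n + 1)) (n : ℕ) :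
    (m : ℕ) → X n →L[ℝ] X m
  | 0 => 0
  | m + 1 =>
    if h : m + 1 = n then by rw [h]; exact ContinuousLinearMap.id ℝ (X n)
    else (φ m).comp (phiTo φ n m)

open Classical in
/-- `σ(x,S)²`: the sum over consecutive pairs `p < q` of `S` of `‖φ_p^q(x_p) - x_q‖²`. -/
noncomputable def sigma2 {X : ℕ → Type*} [∀ n, NormedAddCommGroup (X n)]
    [∀ n, NormedSpace ℝ (X n)] (φ : ∀ n, X n →L[ℝ] X (n + 1))
    (x : ∀ n, X n) (S : Finset ℕ) : ℝ :=
  ∑ p ∈ S, ∑ q ∈ S,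
    if p < q ∧ ∀ r ∈ S, ¬(p < r ∧ r < q) then ‖phiTo φ p q (x p) - x q‖ ^ 2 else 0

noncomputable def sigmaJ {X : ℕ → Type*} [∀ n, NormedAddCommGroup (X n)]
    [∀ n, NormedSpace ℝ (X n)] (φ : ∀ n, X n →L[ℝ] X (n + 1))
    (x : ∀ n, X n) (S : Finset ℕ) : ℝ :=
  Real.sqrt (sigma2 φ x S)

/-- `ρ(x,S)² = σ(x,S)² + ‖x_{max S}‖²`. -/
noncomputable def rho2 {X : ℕ → Type*} [∀ n, NormedAddCommGroup (X n)]
    [∀ n, NormedSpace ℝ (X n)] (φ : ∀ n, X n →L[ℝ] X (n + 1))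
    (x : ∀ n, X n) (S : Finset ℕ) (hS : S.Nonempty) : ℝ :=
  sigma2 φ x S + ‖x (S.max' hS)‖ ^ 2

noncomputable def rhoJ {X : ℕ → Type*} [∀ n, NormedAddCommGroup (X n)]
    [∀ n, NormedSpace ℝ (X n)] (φ : ∀ n, X n →L[ℝ] X (n + 1))
    (x : ∀ n, X n) (S : Finset ℕ) (hS : S.Nonempty) : ℝ :=
  Real.sqrt (rho2 φ x S hS)

/-- The set of values `ρ(x,S)` over finite nonempty `S ⊆ ℕ`. -/
def rhoSet {X : ℕ → Type*} [∀ n, NormedAddCommGroup (X n)]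
    [∀ n, NormedSpace ℝ (X n)] (φ : ∀ n, X n →L[ℝ] X (n + 1))
    (x : ∀ n, X n) : Set ℝ :=
  {r : ℝ | ∃ (S : Finset ℕ) (hS : S.Nonempty), r = rhoJ φ x S hS}

/-- Membership in `Ĵ(Φ)`: `sup_S ρ(x,S) < ∞`. -/
def memJhat {X : ℕ → Type*} [∀ n, NormedAddCommGroup (X n)]
    [∀ n, NormedSpace ℝ (X n)] (φ : ∀ n, X n →L[ℝ] X (n + 1))
    (x : ∀ n, X n) : Prop :=
  BddAbove (rhoSet φ x)

/-- The norm `‖x‖_J = (1/√2) sup_S ρ(x,S)`. -/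
noncomputable def normJ {X : ℕ → Type*} [∀ n, NormedAddCommGroup (X n)]
    [∀ n, NormedSpace ℝ (X n)] (φ : ∀ n, X n →L[ℝ] X (n + 1))
    (x : ∀ n, X n) : ℝ :=
  (Real.sqrt 2)⁻¹ * sSup (rhoSet φ x)

/-- Membership in `J(Φ)`: member of `Ĵ(Φ)` with `‖x_n‖ → 0`. -/
def memJ {X : ℕ → Type*} [∀ n, NormedAddCommGroup (X n)]
    [∀ n, NormedSpace ℝ (X n)] (φ : ∀ n, X n →L[ℝ] X (n + 1))
    (x : ∀ n, X n) : Prop :=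
  memJhat φ x ∧ Tendsto (fun n => ‖x n‖) atTop (𝓝 0)

open Classical in
/-- The coordinate restriction `P_I`. -/
noncomputable def restrictSeq {X : ℕ → Type*} [∀ n, NormedAddCommGroup (X n)]
    (I : Set ℕ) (x : ∀ n, X n) : ∀ n, X n :=
  fun n => if n ∈ I then x n else 0

/-- The stepping map `Q_α`. -/
noncomputable def stepSeq {X : ℕ → Type*} [∀ n, NormedAddCommGroup (X n)]
    [∀ n, NormedSpace ℝ (X n)] (φ : ∀ n, X n →L[ℝ] X (n + 1))
    (α : ℕ → ℕ) (x : ∀ n, X n) : ∀ n, X n :=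
  fun n => phiTo φ (α n) n (x (α n))

/-!
Let `B = S ∩ I`, with least element `a` and greatest element `b`. Since `I` is an interval, `S`
splits as `A ∪ B ∪ C` with `A < B < C`, and `x` vanishes on `A` and on `C`. Along `A` all gaps
contribute `0` and the gap from `A` into `B` contributes `‖x_a‖²`; appending `C` only trades
`‖x_b‖²` for `‖φ_b^c(x_b)‖² ≤ ‖x_b‖²`. So `ρ(x,S)² ≤ ‖x_a‖² + ρ(x,B)²`, which is exactly
`ρ(x, {m} ∪ B)²` because `x_m = 0`.
-/

section

open Finset

variable {X : ℕ → Type*} [∀ n, NormedAddCommGroup (X n)] [∀ n, NormedSpace ℝ (X n)]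
  (φ : ∀ n, X n →L[ℝ] X (n + 1))

theorem norm_phiTo_apply_le (hφ : ∀ n, ‖φ n‖ ≤ 1) {n : ℕ} (y : X n) (m : ℕ) :
    ‖phiTo φ n m y‖ ≤ ‖y‖ := by
  induction m with
  | zero => simp [phiTo]
  | succ k ih =>
    rw [phiTo]
    split_ifs with h
    · subst h; exact le_rfl
    · calc ‖(φ k) (phiTo φ n k y)‖ ≤ ‖φ k‖ * ‖phiTo φ n k y‖ := (φ k).le_opNorm _
        _ ≤ 1 * ‖y‖ := by gcongr; exact hφ k
        _ = ‖y‖ := one_mul _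

open Classical in
noncomputable def consecutivePairs (S : Finset ℕ) : Finset (ℕ × ℕ) :=
  (S ×ˢ S).filter fun pq => pq.1 < pq.2 ∧ ∀ r ∈ S, ¬(pq.1 < r ∧ r < pq.2)

theorem mem_of_mem_consecutivePairs {S : Finset ℕ} {pq : ℕ × ℕ}
    (h : pq ∈ consecutivePairs S) : pq.1 ∈ S ∧ pq.2 ∈ S :=
  mem_product.1 (mem_filter.1 h).1

theorem consecutivePairs_union {A B : Finset ℕ} (hA : A.Nonempty) (hB : B.Nonempty)
    (hAB : ∀ p ∈ A, ∀ q ∈ B, p < q) :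
    consecutivePairs (A ∪ B) =
      insert (A.max' hA, B.min' hB) (consecutivePairs A ∪ consecutivePairs B) := by
  ext ⟨p, q⟩
  simp only [consecutivePairs, mem_insert, mem_union, mem_filter, mem_product, Prod.mk.injEq]
  constructor
  · rintro ⟨⟨hp | hp, hq | hq⟩, hpq, hgap⟩
    · exact Or.inr (Or.inl ⟨⟨hp, hq⟩, hpq, fun r hr => hgap r (Or.inl hr)⟩)
    · refine Or.inl ⟨?_, ?_⟩
      · by_contra hne
        exact hgap _ (Or.inl (A.max'_mem hA))
          ⟨(A.le_max' p hp).lt_of_ne hne, hAB _ (A.max'_mem hA) q hq⟩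
      · by_contra hne
        exact hgap _ (Or.inr (B.min'_mem hB))
          ⟨hAB p hp _ (B.min'_mem hB), (B.min'_le q hq).lt_of_ne' hne⟩
    · exact absurd hpq (hAB q hq p hp).not_gt
    · exact Or.inr (Or.inr ⟨⟨hp, hq⟩, hpq, fun r hr => hgap r (Or.inr hr)⟩)
  · rintro (⟨rfl, rfl⟩ | ⟨⟨hp, hq⟩, hpq, hgap⟩ | ⟨⟨hp, hq⟩, hpq, hgap⟩)
    · refine ⟨⟨Or.inl (A.max'_mem hA), Or.inr (B.min'_mem hB)⟩,
        hAB _ (A.max'_mem hA) _ (B.min'_mem hB), fun r hr hbetween => ?_⟩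
      rcases hr with hr | hr
      · exact (A.le_max' r hr).not_gt hbetween.1
      · exact (B.min'_le r hr).not_gt hbetween.2
    · refine ⟨⟨Or.inl hp, Or.inl hq⟩, hpq, fun r hr hbetween => ?_⟩
      rcases hr with hr | hr
      · exact hgap r hr hbetween
      · exact (hAB q hq r hr).not_gt hbetween.2
    · refine ⟨⟨Or.inr hp, Or.inr hq⟩, hpq, fun r hr hbetween => ?_⟩
      rcases hr with hr | hr
      · exact (hAB r hr p hp).not_gt hbetween.1
      · exact hgap r hr hbetween

theorem sigma2_eq_sum_consecutivePairs (x : ∀ n, X n) (S : Finset ℕ) :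
    sigma2 φ x S = ∑ pq ∈ consecutivePairs S, ‖phiTo φ pq.1 pq.2 (x pq.1) - x pq.2‖ ^ 2 := by
  rw [consecutivePairs, sum_filter, sum_product]
  rfl

theorem sigma2_eq_zero_of_forall_eq_zero {x : ∀ n, X n} {S : Finset ℕ}
    (hx : ∀ n ∈ S, x n = 0) : sigma2 φ x S = 0 := by
  rw [sigma2_eq_sum_consecutivePairs]
  refine sum_eq_zero fun pq hpq => ?_
  obtain ⟨hp, hq⟩ := mem_of_mem_consecutivePairs hpq
  simp [hx _ hp, hx _ hq]

theorem sigma2_union (x : ∀ n, X n) {A B : Finset ℕ} (hA : A.Nonempty) (hB : B.Nonempty)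
    (hAB : ∀ p ∈ A, ∀ q ∈ B, p < q) :
    sigma2 φ x (A ∪ B) = sigma2 φ x A
      + ‖phiTo φ (A.max' hA) (B.min' hB) (x (A.max' hA)) - x (B.min' hB)‖ ^ 2
      + sigma2 φ x B := by
  have hdisj : Disjoint (consecutivePairs A) (consecutivePairs B) :=
    disjoint_left.2 fun pq hpA hpB =>
      (hAB _ (mem_of_mem_consecutivePairs hpA).1 _ (mem_of_mem_consecutivePairs hpB).1).false
  have hbridge : (A.max' hA, B.min' hB) ∉ consecutivePairs A ∪ consecutivePairs B := by
    rw [mem_union]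
    rintro (h | h)
    · exact (hAB _ (mem_of_mem_consecutivePairs h).2 _ (B.min'_mem hB)).false
    · exact (hAB _ (A.max'_mem hA) _ (mem_of_mem_consecutivePairs h).1).false
  rw [sigma2_eq_sum_consecutivePairs, consecutivePairs_union hA hB hAB, sum_insert hbridge,
    sum_union hdisj, ← sigma2_eq_sum_consecutivePairs, ← sigma2_eq_sum_consecutivePairs]
  ring

theorem rho2_nonneg (x : ∀ n, X n) {S : Finset ℕ} (hS : S.Nonempty) : 0 ≤ rho2 φ x S hS := by
  rw [rho2, sigma2_eq_sum_consecutivePairs]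
  positivity

theorem rho2_eq_zero_of_forall_eq_zero {x : ∀ n, X n} {S : Finset ℕ} (hS : S.Nonempty)
    (hx : ∀ n ∈ S, x n = 0) : rho2 φ x S hS = 0 := by
  simp [rho2, sigma2_eq_zero_of_forall_eq_zero φ hx, hx _ (S.max'_mem hS)]

theorem rho2_union_of_forall_eq_zero_left {x : ∀ n, X n} {A B : Finset ℕ}
    (hA : A.Nonempty) (hB : B.Nonempty) (hAB : ∀ p ∈ A, ∀ q ∈ B, p < q)
    (hxA : ∀ n ∈ A, x n = 0) :
    rho2 φ x (A ∪ B) (hB.mono subset_union_right) = ‖x (B.min' hB)‖ ^ 2 + rho2 φ x B hB := by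
  have hmax : (A ∪ B).max' (hB.mono subset_union_right) = B.max' hB := by
    rw [max'_union hA hB]
    exact max_eq_right (hAB _ (A.max'_mem hA) _ (B.max'_mem hB)).le
  rw [rho2, rho2, hmax, sigma2_union φ x hA hB hAB, sigma2_eq_zero_of_forall_eq_zero φ hxA,
    hxA _ (A.max'_mem hA), map_zero, zero_sub, norm_neg]
  ring

theorem rho2_union_le_of_forall_eq_zero_right (hφ : ∀ n, ‖φ n‖ ≤ 1) {x : ∀ n, X n}
    {T C : Finset ℕ} (hT : T.Nonempty) (hTC : ∀ p ∈ T, ∀ q ∈ C, p < q)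
    (hxC : ∀ n ∈ C, x n = 0) :
    rho2 φ x (T ∪ C) (hT.mono subset_union_left) ≤ rho2 φ x T hT := by
  rcases C.eq_empty_or_nonempty with rfl | hC
  · simp only [union_empty, le_refl]
  have hmax : (T ∪ C).max' (hT.mono subset_union_left) = C.max' hC := by
    rw [max'_union hT hC]
    exact max_eq_right (hTC _ (T.max'_mem hT) _ (C.max'_mem hC)).le
  rw [rho2, rho2, hmax, sigma2_union φ x hT hC hTC, sigma2_eq_zero_of_forall_eq_zero φ hxC,
    hxC _ (C.min'_mem hC), hxC _ (C.max'_mem hC), sub_zero, norm_zero]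
  norm_num
  gcongr
  exact norm_phiTo_apply_le φ hφ _ _

theorem rho2_le_of_forall_eq_zero_off (hφ : ∀ n, ‖φ n‖ ≤ 1) {x : ∀ n, X n}
    {S B : Finset ℕ} (hS : S.Nonempty) (hB : B.Nonempty) (hBS : B ⊆ S)
    (hBconv : ∀ n ∈ S, B.min' hB ≤ n → n ≤ B.max' hB → n ∈ B)
    (hx : ∀ n ∈ S, n ∉ B → x n = 0) :
    rho2 φ x S hS ≤ ‖x (B.min' hB)‖ ^ 2 + rho2 φ x B hB := by
  set a := B.min' hB
  set b := B.max' hB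
  set A := S.filter (· < a)
  set C := S.filter (b < ·)
  have hS_eq : S = (A ∪ B) ∪ C := by
    ext n
    simp only [A, C, mem_union, mem_filter]
    constructor
    · intro hn
      by_cases hna : n < a
      · exact Or.inl (Or.inl ⟨hn, hna⟩)
      by_cases hbn : b < n
      · exact Or.inr ⟨hn, hbn⟩
      exact Or.inl (Or.inr (hBconv n hn (not_lt.1 hna) (not_lt.1 hbn)))
    · rintro ((⟨hn, -⟩ | hn) | ⟨hn, -⟩)
      exacts [hn, hBS hn, hn]
  have hAB : ∀ p ∈ A, ∀ q ∈ B, p < q := fun p hp q hq =>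
    (mem_filter.1 hp).2.trans_le (B.min'_le q hq)
  have hBC : ∀ p ∈ A ∪ B, ∀ q ∈ C, p < q := by
    intro p hp q hq
    refine lt_of_le_of_lt ?_ (mem_filter.1 hq).2
    rcases mem_union.1 hp with hp | hp
    · exact ((mem_filter.1 hp).2.trans_le (B.min'_le_max' hB)).le
    · exact B.le_max' p hp
  have hxA : ∀ n ∈ A, x n = 0 := fun n hn =>
    hx n (mem_filter.1 hn).1 fun hnB => (B.min'_le n hnB).not_gt (mem_filter.1 hn).2
  have hxC : ∀ n ∈ C, x n = 0 := fun n hn =>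
    hx n (mem_filter.1 hn).1 fun hnB => (B.le_max' n hnB).not_gt (mem_filter.1 hn).2
  calc rho2 φ x S hS = rho2 φ x ((A ∪ B) ∪ C) (hS_eq ▸ hS) := by congr 1
    _ ≤ rho2 φ x (A ∪ B) (hB.mono subset_union_right) :=
      rho2_union_le_of_forall_eq_zero_right φ hφ _ hBC hxC
    _ ≤ ‖x a‖ ^ 2 + rho2 φ x B hB := by
      rcases A.eq_empty_or_nonempty with hA | hA
      · simp only [hA, empty_union]
        exact le_add_of_nonneg_left (sq_nonneg _)
      · exact (rho2_union_of_forall_eq_zero_left φ hA hB hAB hxA).le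

end

open Classical in
theorem stmt6_general {X : ℕ → Type*} [∀ n, NormedAddCommGroup (X n)] [∀ n, NormedSpace ℝ (X n)]
    (φ : ∀ n, X n →L[ℝ] X (n + 1)) (hφ : ∀ n, ‖φ n‖ ≤ 1)
    (I : Set ℕ) (hI : I.OrdConnected)
    (x : ∀ n, X n) (hx : ∀ n, n ∉ I → x n = 0)
    (m : ℕ) (hm : ∀ i ∈ I, m < i)
    (S : Finset ℕ) (hS : S.Nonempty) :
    rhoJ φ x S hS ≤
      rhoJ φ x (insert m (S.filter (· ∈ I))) (Finset.insert_nonempty _ _) := by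
  refine Real.sqrt_le_sqrt ?_
  set B := S.filter (· ∈ I)
  have hxB : ∀ n ∈ S, n ∉ B → x n = 0 := fun n hn hnB =>
    hx n fun hnI => hnB (Finset.mem_filter.2 ⟨hn, hnI⟩)
  rcases B.eq_empty_or_nonempty with hB | hB
  · rw [rho2_eq_zero_of_forall_eq_zero φ hS fun n hn => hxB n hn (hB ▸ Finset.notMem_empty n)]
    exact rho2_nonneg φ x _
  have hBI : ∀ n ∈ B, n ∈ I := fun n hn => (Finset.mem_filter.1 hn).2
  have hBconv : ∀ n ∈ S, B.min' hB ≤ n → n ≤ B.max' hB → n ∈ B := fun n hn ha hb =>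
    Finset.mem_filter.2 ⟨hn, hI.out (hBI _ (B.min'_mem hB)) (hBI _ (B.max'_mem hB)) ⟨ha, hb⟩⟩
  calc rho2 φ x S hS ≤ ‖x (B.min' hB)‖ ^ 2 + rho2 φ x B hB :=
        rho2_le_of_forall_eq_zero_off φ hφ hS hB (Finset.filter_subset _ _) hBconv hxB
    _ = rho2 φ x ({m} ∪ B) _ :=
        (rho2_union_of_forall_eq_zero_left φ (Finset.singleton_nonempty m) hB
          (by simpa using fun q hq => hm q (hBI q hq))
          (by simpa using hx m fun hmI => (hm m hmI).false)).symm

open Classical in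
/-- if `x` is supported in an interval `I ⊆ ℕ` and `m < min I`, then
`ρ(x,S) ≤ ρ(x, {m} ∪ (S ∩ I))` for every finite nonempty `S`. -/
theorem stmt6 {X : ℕ → Type*} [∀ n, NormedAddCommGroup (X n)] [∀ n, NormedSpace ℝ (X n)]
    [∀ n, CompleteSpace (X n)] [Subsingleton (X 0)]
    (φ : ∀ n, X n →L[ℝ] X (n + 1)) (hφ : ∀ n, ‖φ n‖ ≤ 1)
    (I : Set ℕ) (hI : I.OrdConnected)
    (x : ∀ n, X n) (hx : ∀ n, n ∉ I → x n = 0)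
    (m : ℕ) (hm : ∀ i ∈ I, m < i)
    (S : Finset ℕ) (hS : S.Nonempty) :
    rhoJ φ x S hS ≤
      rhoJ φ x (insert m (S.filter (· ∈ I))) (Finset.insert_nonempty _ _) :=
  stmt6_general φ hφ I hI x hx m hm S hS
end

section
/- Let I_1, …, I_m ⊆ ℕ_0 be pairwise disjoint intervals and let x_j ∈ R(P_{I_j}) for each j. Then ‖Σ_{j=1}^m x_j‖_J² ≤ 3 Σ_{j=1}^m ‖x_j‖_J². -/
open Filter Topology

/-!
For a pair `p < q`, at most two of the vectors `φ_p^q (x_j p) - x_j q` are nonzero (those of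
the `j` whose support contains `p` or `q`), and at most one `x_j k` is nonzero, so Cauchy–Schwarz
over at most two terms gives `ρ(Σ x_j, S)² ≤ 2 Σ ρ(x_j, S)²` for every `S`. Taking suprema,
`‖Σ x_j‖_J² ≤ 2 Σ ‖x_j‖_J²`.
-/

open Finset

theorem norm_sum_sq_le_card_mul_sum_sq {ι E : Type*} [Fintype ι] [SeminormedAddCommGroup E]
    (v : ι → E) (t : Finset ι) (hv : ∀ i ∉ t, v i = 0) :
    ‖∑ i, v i‖ ^ 2 ≤ #t * ∑ i, ‖v i‖ ^ 2 := by
  rw [← sum_subset (subset_univ t) fun i _ hi => hv i hi]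
  calc ‖∑ i ∈ t, v i‖ ^ 2 ≤ (∑ i ∈ t, ‖v i‖) ^ 2 :=
        pow_le_pow_left₀ (norm_nonneg _) (norm_sum_le _ _) 2
    _ ≤ #t * ∑ i ∈ t, ‖v i‖ ^ 2 := sq_sum_le_card_mul_sum_sq
    _ ≤ #t * ∑ i, ‖v i‖ ^ 2 := by
      gcongr ?_ * ?_
      exact sum_le_sum_of_subset_of_nonneg (subset_univ t) fun _ _ _ => sq_nonneg _

section DisjointSupports

variable {X : ℕ → Type*} [∀ n, NormedAddCommGroup (X n)] {ι : Type*} [Fintype ι]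
  {x : ι → ∀ n, X n}

open Classical in
theorem card_filter_ne_zero_le_one (hx : Pairwise fun i j => ∀ n, x i n = 0 ∨ x j n = 0)
    (n : ℕ) : #{j | x j n ≠ 0} ≤ 1 :=
  card_le_one.mpr fun i hi j hj => by
    by_contra hij
    simp only [mem_filter, mem_univ, true_and] at hi hj
    exact (hx hij n).elim hi hj

theorem norm_sum_apply_sq_le (hx : Pairwise fun i j => ∀ n, x i n = 0 ∨ x j n = 0) (n : ℕ) :
    ‖∑ j, x j n‖ ^ 2 ≤ ∑ j, ‖x j n‖ ^ 2 := by
  classical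
  refine (norm_sum_sq_le_card_mul_sum_sq _ {j | x j n ≠ 0} fun j hj => ?_).trans ?_
  · simpa using hj
  · exact mul_le_of_le_one_left (sum_nonneg fun _ _ => sq_nonneg _)
      (by exact_mod_cast card_filter_ne_zero_le_one hx n)

variable [∀ n, NormedSpace ℝ (X n)] (φ : ∀ n, X n →L[ℝ] X (n + 1))

theorem norm_phiTo_sum_sub_sum_sq_le (hx : Pairwise fun i j => ∀ n, x i n = 0 ∨ x j n = 0)
    (p q : ℕ) :
    ‖phiTo φ p q (∑ j, x j p) - ∑ j, x j q‖ ^ 2 ≤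
      2 * ∑ j, ‖phiTo φ p q (x j p) - x j q‖ ^ 2 := by
  classical
  rw [map_sum, ← sum_sub_distrib]
  let support (n : ℕ) : Finset ι := {j | x j n ≠ 0}
  refine (norm_sum_sq_le_card_mul_sum_sq _ (support p ∪ support q) fun j hj => ?_).trans ?_
  · simp only [support, mem_union, mem_filter, mem_univ, true_and, not_or, not_not] at hj
    rw [hj.1, hj.2, map_zero, sub_zero]
  · gcongr
    exact_mod_cast (card_union_le _ _).trans
      (add_le_add (card_filter_ne_zero_le_one hx p) (card_filter_ne_zero_le_one hx q))

theorem sigma2_sum_le (hx : Pairwise fun i j => ∀ n, x i n = 0 ∨ x j n = 0) (S : Finset ℕ) :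
    sigma2 φ (∑ j, x j) S ≤ 2 * ∑ j, sigma2 φ (x j) S := by
  simp only [sigma2, mul_sum]
  rw [sum_comm (s := univ)]
  refine sum_le_sum fun p _ => ?_
  rw [sum_comm (s := univ)]
  refine sum_le_sum fun q _ => ?_
  split_ifs
  · simpa only [Finset.sum_apply, mul_sum] using norm_phiTo_sum_sub_sum_sq_le φ hx p q
  · simp

theorem rho2_sum_le (hx : Pairwise fun i j => ∀ n, x i n = 0 ∨ x j n = 0) (S : Finset ℕ)
    (hS : S.Nonempty) : rho2 φ (∑ j, x j) S hS ≤ 2 * ∑ j, rho2 φ (x j) S hS := by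
  simp only [rho2, sum_add_distrib, mul_add, Finset.sum_apply]
  exact add_le_add (sigma2_sum_le φ hx S) ((norm_sum_apply_sq_le hx _).trans
    (le_mul_of_one_le_left (sum_nonneg fun _ _ => sq_nonneg _) one_le_two))

end DisjointSupports

section NormJ

variable {X : ℕ → Type*} [∀ n, NormedAddCommGroup (X n)] [∀ n, NormedSpace ℝ (X n)]
  (φ : ∀ n, X n →L[ℝ] X (n + 1)) {x : ∀ n, X n}

theorem two_mul_normJ_sq (x : ∀ n, X n) : 2 * normJ φ x ^ 2 = sSup (rhoSet φ x) ^ 2 := by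
  rw [normJ, mul_pow, inv_pow, Real.sq_sqrt zero_le_two, ← mul_assoc,
    mul_inv_cancel₀ two_ne_zero, one_mul]

theorem rho2_le_two_mul_normJ_sq (hx : memJhat φ x) (S : Finset ℕ) (hS : S.Nonempty) :
    rho2 φ x S hS ≤ 2 * normJ φ x ^ 2 := by
  rw [two_mul_normJ_sq]
  exact (Real.sqrt_le_iff.mp (le_csSup hx ⟨S, hS, rfl⟩)).2

theorem memJhat_and_normJ_sq_le {c : ℝ} (hc : 0 ≤ c)
    (h : ∀ (S : Finset ℕ) (hS : S.Nonempty), rho2 φ x S hS ≤ 2 * c) :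
    memJhat φ x ∧ normJ φ x ^ 2 ≤ c := by
  have hbdd : ∀ r ∈ rhoSet φ x, r ≤ √(2 * c) := by
    rintro _ ⟨S, hS, rfl⟩
    exact Real.sqrt_le_sqrt (h S hS)
  have hx : memJhat φ x := ⟨_, hbdd⟩
  have hsup : sSup (rhoSet φ x) ≤ √(2 * c) :=
    csSup_le ⟨_, {0}, singleton_nonempty 0, rfl⟩ hbdd
  have hsup_nonneg : 0 ≤ sSup (rhoSet φ x) :=
    (Real.sqrt_nonneg _).trans (le_csSup hx ⟨{0}, singleton_nonempty 0, rfl⟩)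
  have hsq := (Real.le_sqrt hsup_nonneg (by positivity)).mp hsup
  rw [← two_mul_normJ_sq] at hsq
  exact ⟨hx, by linarith⟩

end NormJ

theorem stmt8_general {X : ℕ → Type*} [∀ n, NormedAddCommGroup (X n)] [∀ n, NormedSpace ℝ (X n)]
    (φ : ∀ n, X n →L[ℝ] X (n + 1))
    (m : ℕ) (I : Fin m → Set ℕ)
    (hdisj : Pairwise (Function.onFun Disjoint I))
    (x : Fin m → ∀ n, X n) (hsupp : ∀ j n, n ∉ I j → x j n = 0)
    (hmem : ∀ j, memJhat φ (x j)) :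
    memJhat φ (∑ j, x j) ∧
    normJ φ (∑ j, x j) ^ 2 ≤ 3 * ∑ j, normJ φ (x j) ^ 2 := by
  have hx : Pairwise fun i j => ∀ n, x i n = 0 ∨ x j n = 0 := by
    intro i j hij n
    by_cases hn : n ∈ I i
    · exact .inr (hsupp j n (Set.disjoint_left.mp (hdisj hij) hn))
    · exact .inl (hsupp i n hn)
  have hsum_nonneg : 0 ≤ ∑ j, normJ φ (x j) ^ 2 := by positivity
  have hrho2 (S : Finset ℕ) (hS : S.Nonempty) :
      rho2 φ (∑ j, x j) S hS ≤ 2 * (2 * ∑ j, normJ φ (x j) ^ 2) :=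
    calc rho2 φ (∑ j, x j) S hS ≤ 2 * ∑ j, rho2 φ (x j) S hS := rho2_sum_le φ hx S hS
      _ ≤ 2 * ∑ j, 2 * normJ φ (x j) ^ 2 := by
        gcongr with j
        exact rho2_le_two_mul_normJ_sq φ (hmem j) S hS
      _ = 2 * (2 * ∑ j, normJ φ (x j) ^ 2) := by rw [← mul_sum]
  obtain ⟨hmem_sum, hnorm⟩ := memJhat_and_normJ_sq_le φ (by positivity) hrho2
  exact ⟨hmem_sum, by linarith⟩

/-- upper 2-estimate. If `I_1, …, I_m` are pairwise disjoint intervals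
and `x_j` is supported in `I_j`, then `‖Σ x_j‖_J² ≤ 3 Σ ‖x_j‖_J²`. -/
theorem stmt8 {X : ℕ → Type*} [∀ n, NormedAddCommGroup (X n)] [∀ n, NormedSpace ℝ (X n)]
    [∀ n, CompleteSpace (X n)] [Subsingleton (X 0)]
    (φ : ∀ n, X n →L[ℝ] X (n + 1)) (hφ : ∀ n, ‖φ n‖ ≤ 1)
    (m : ℕ) (I : Fin m → Set ℕ) (hI : ∀ j, (I j).OrdConnected)
    (hdisj : Pairwise (Function.onFun Disjoint I))
    (x : Fin m → ∀ n, X n) (hsupp : ∀ j n, n ∉ I j → x j n = 0)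
    (hmem : ∀ j, memJhat φ (x j)) :
    memJhat φ (∑ j, x j) ∧
    normJ φ (∑ j, x j) ^ 2 ≤ 3 * ∑ j, normJ φ (x j) ^ 2 :=
  stmt8_general φ m I hdisj x hsupp hmem
end

section
/- If X and Y are subprojective Banach spaces, then the direct sum X ⊕ Y is subprojective. -/
open Submodule Set

def seqOfPrefix {α : Type*} (next : ℕ → Set α → α) : ℕ → α
  | n => next n (Set.range fun i : Fin n => seqOfPrefix next i)

theorem seqOfPrefix_eq {α : Type*} (next : ℕ → Set α → α) (n : ℕ) :
    seqOfPrefix next n = next n (seqOfPrefix next '' Iio n) := by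
  rw [seqOfPrefix]
  congr
  ext y; simp [Fin.exists_iff]

theorem Submodule.finiteDimensional_of_map_of_inf_ker {K V W : Type*} [DivisionRing K]
    [AddCommGroup V] [Module K V] [AddCommGroup W] [Module K W] (f : V →ₗ[K] W) (N : Submodule K V)
    [FiniteDimensional K (N.map f)] [FiniteDimensional K (N ⊓ LinearMap.ker f : Submodule K V)] :
    FiniteDimensional K N := by
  rw [← fg_iff_finiteDimensional] at *
  exact fg_of_fg_map_of_fg_inf_ker f ‹_› ‹_›

theorem Submodule.not_finiteDimensional_inf_ker {K V W : Type*} [DivisionRing K]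
    [AddCommGroup V] [Module K V] [AddCommGroup W] [Module K W] [FiniteDimensional K W]
    {N : Submodule K V} (hN : ¬FiniteDimensional K N) (f : V →ₗ[K] W) :
    ¬FiniteDimensional K (N ⊓ LinearMap.ker f : Submodule K V) :=
  fun _ ↦ hN (N.finiteDimensional_of_map_of_inf_ker f)

theorem sum_range_smul_mem_span {R V : Type*} [Semiring R] [AddCommMonoid V] [Module R V]
    (x : ℕ → V) (a : ℕ → R) (n : ℕ) :
    ∑ i ∈ Finset.range n, a i • x i ∈ span R (x '' Iio n) :=
  sum_mem fun i hi ↦ smul_mem _ _ (subset_span ⟨i, by simpa using hi, rfl⟩)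

theorem exists_eq_sum_range_of_mem_span_range {R V : Type*} [Semiring R] [AddCommMonoid V]
    [Module R V] {x : ℕ → V} {y : V} (hy : y ∈ span R (range x)) :
    ∃ (a : ℕ → R) (n : ℕ), y = ∑ i ∈ Finset.range n, a i • x i := by
  obtain ⟨c, rfl⟩ := Finsupp.mem_span_range_iff_exists_finsupp.mp hy
  obtain ⟨n, hn⟩ := c.support.exists_nat_subset_range
  exact ⟨c, n, Finsupp.sum_of_support_subset c hn _ fun _ _ ↦ zero_smul R _⟩

section

variable {E F : Type*} [NormedAddCommGroup E] [NormedSpace ℝ E]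
  [NormedAddCommGroup F] [NormedSpace ℝ F]

theorem mul_norm_le_norm_add_of_forall_norm_eq_one {W S : Submodule ℝ E} {c : ℝ}
    (h : ∀ x ∈ W, ∀ f ∈ S, ‖f‖ = 1 → c ≤ ‖f + x‖) :
    ∀ x ∈ W, ∀ f ∈ S, c * ‖f‖ ≤ ‖f + x‖ := by
  intro x hx f hf
  rcases eq_or_ne f 0 with rfl | hf0
  · simp
  have hfpos : 0 < ‖f‖ := norm_pos_iff.mpr hf0
  have hsplit : f + x = ‖f‖ • (‖f‖⁻¹ • f + ‖f‖⁻¹ • x) := by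
    rw [smul_add, smul_inv_smul₀ hfpos.ne', smul_inv_smul₀ hfpos.ne']
  have := h _ (W.smul_mem ‖f‖⁻¹ hx) _ (S.smul_mem ‖f‖⁻¹ hf) (by simp [norm_smul, hfpos.ne'])
  rw [hsplit, norm_smul, norm_norm, mul_comm c]
  exact mul_le_mul_of_nonneg_left this hfpos.le

theorem exists_le_forall_mul_norm_le_norm_add (S : Submodule ℝ E) [FiniteDimensional ℝ S]
    {W : Submodule ℝ E} (hWc : IsClosed (W : Set E)) (hW : ¬FiniteDimensional ℝ W)
    {δ : ℝ} (hδ : 0 < δ) :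
    ∃ W' ≤ W, IsClosed (W' : Set E) ∧ ¬FiniteDimensional ℝ W' ∧
      ∀ x ∈ W', ∀ f ∈ S, (1 - δ) * ‖f‖ ≤ ‖f + x‖ := by
  obtain ⟨t, ht, htfin, hcover⟩ := (isCompact_sphere (0 : S) 1).finite_cover_balls hδ
  have : Finite t := htfin.to_subtype
  have hnorm (y : t) : ‖(y : E)‖ = 1 := by simpa using ht y.2
  choose g hg1 hgy using fun y : t ↦ exists_dual_vector ℝ (y : E) (by simp [hnorm y])
  let G : E →L[ℝ] t → ℝ := ContinuousLinearMap.pi g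
  refine ⟨W ⊓ LinearMap.ker (G : E →ₗ[ℝ] t → ℝ), inf_le_left,
    hWc.inter G.isClosed_ker, not_finiteDimensional_inf_ker hW _,
    mul_norm_le_norm_add_of_forall_norm_eq_one ?_⟩
  rintro x ⟨-, hx⟩ f hf hf1
  obtain ⟨y, hyt, hfy⟩ : ∃ y ∈ t, ‖(⟨f, hf⟩ : S) - y‖ < δ := by
    simpa [dist_eq_norm] using hcover (show (⟨f, hf⟩ : S) ∈ Metric.sphere 0 1 by simpa using hf1)
  have hgx : g ⟨y, hyt⟩ x = 0 := congrFun hx ⟨y, hyt⟩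
  have hyx : 1 ≤ ‖(y : E) + x‖ := by
    calc (1 : ℝ) = g ⟨y, hyt⟩ ((y : E) + x) := by simp [hgx, hgy, hnorm ⟨y, hyt⟩]
      _ ≤ ‖g ⟨y, hyt⟩‖ * ‖(y : E) + x‖ := le_of_abs_le ((g _).le_opNorm _)
      _ = ‖(y : E) + x‖ := by rw [hg1, one_mul]
  have : ‖(y : E) + x‖ ≤ ‖f + x‖ + ‖f - y‖ :=
    calc ‖(y : E) + x‖ = ‖(f + x) - (f - y)‖ := by congr 1; abel
      _ ≤ ‖f + x‖ + ‖f - y‖ := norm_sub_le _ _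
  have : ‖f - y‖ < δ := hfy
  linarith

-- Each `x n` is almost Birkhoff–James orthogonal to its predecessors; when `∏ (1 - δ n) > 0`,
-- this makes `x` a basic sequence.
def IsMazurSequence (δ : ℕ → ℝ) (x : ℕ → E) : Prop :=
  ∀ n, ∀ f ∈ span ℝ (x '' Iio n), ∀ t : ℝ, (1 - δ n) * ‖f‖ ≤ ‖f + t • x n‖

theorem IsMazurSequence.norm_sum_range_le_two_mul {x : ℕ → E}
    (hx : IsMazurSequence (fun n ↦ (1 / 2) ^ (n + 2)) x) (a : ℕ → ℝ) {m n : ℕ} (hmn : m ≤ n) :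
    ‖∑ i ∈ Finset.range m, a i • x i‖ ≤ 2 * ‖∑ i ∈ Finset.range n, a i • x i‖ := by
  set S := fun n ↦ ∑ i ∈ Finset.range n, a i • x i
  -- the factors `1 - 2⁻ᵏ⁻²` for `m ≤ k < n` multiply to at least `1/2 + 2⁻ⁿ⁻¹`
  have key : (1 / 2 + (1 / 2) ^ (n + 1)) * ‖S m‖ ≤ ‖S n‖ := by
    induction n, hmn using Nat.le_induction with
    | base =>
      have : (1 / 2 : ℝ) ^ (m + 1) ≤ 1 / 2 :=
        pow_le_of_le_one (by norm_num) (by norm_num) (by omega)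
      nlinarith [norm_nonneg (S m)]
    | succ n hmn ih =>
      have hstep : (1 - (1 / 2) ^ (n + 2)) * ‖S n‖ ≤ ‖S (n + 1)‖ := by
        simpa [S, Finset.sum_range_succ] using hx n _ (sum_range_smul_mem_span x a n) (a n)
      set u : ℝ := (1 / 2) ^ (n + 1)
      have hu : u ≤ 1 / 2 := pow_le_of_le_one (by norm_num) (by norm_num) (by omega)
      have hu0 : 0 ≤ u := by positivity
      have h2 : (1 / 2 : ℝ) ^ (n + 2) = u / 2 := by ring
      rw [h2] at hstep ⊢
      calc (1 / 2 + u / 2) * ‖S m‖ ≤ (1 - u / 2) * ((1 / 2 + u) * ‖S m‖) := by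
            nlinarith [norm_nonneg (S m), mul_nonneg hu0 (sub_nonneg.2 hu)]
        _ ≤ (1 - u / 2) * ‖S n‖ := by gcongr; linarith
        _ ≤ ‖S (n + 1)‖ := hstep
  have : (0 : ℝ) ≤ (1 / 2) ^ (n + 1) := by positivity
  nlinarith [norm_nonneg (S m)]

theorem IsMazurSequence.abs_le_four_mul {x : ℕ → E}
    (hx : IsMazurSequence (fun n ↦ (1 / 2) ^ (n + 2)) x) (hx1 : ∀ n, ‖x n‖ = 1) (a : ℕ → ℝ)
    {m n : ℕ} (hmn : m < n) : |a m| ≤ 4 * ‖∑ i ∈ Finset.range n, a i • x i‖ := by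
  have h1 := hx.norm_sum_range_le_two_mul a hmn
  have h2 := hx.norm_sum_range_le_two_mul a hmn.le
  calc |a m| = ‖a m • x m‖ := by rw [norm_smul, hx1, mul_one, Real.norm_eq_abs]
    _ = ‖∑ i ∈ Finset.range (m + 1), a i • x i - ∑ i ∈ Finset.range m, a i • x i‖ := by
      rw [Finset.sum_range_succ, add_sub_cancel_left]
    _ ≤ ‖∑ i ∈ Finset.range (m + 1), a i • x i‖ + ‖∑ i ∈ Finset.range m, a i • x i‖ :=
      norm_sub_le _ _
    _ ≤ 4 * ‖∑ i ∈ Finset.range n, a i • x i‖ := by linarith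

theorem IsMazurSequence.norm_apply_sum_range_le {x : ℕ → E}
    (hx : IsMazurSequence (fun n ↦ (1 / 2) ^ (n + 2)) x) (hx1 : ∀ n, ‖x n‖ = 1)
    {T : E →L[ℝ] F} {ε : ℝ} (hT : ∀ n, ‖T (x n)‖ ≤ ε * (1 / 2) ^ (n + 3)) (a : ℕ → ℝ) (n : ℕ) :
    ‖T (∑ i ∈ Finset.range n, a i • x i)‖ ≤ ε * ‖∑ i ∈ Finset.range n, a i • x i‖ := by
  set s := ‖∑ i ∈ Finset.range n, a i • x i‖
  have hε : 0 ≤ ε := nonneg_of_mul_nonneg_left ((norm_nonneg _).trans (hT 0)) (by positivity)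
  calc ‖T (∑ i ∈ Finset.range n, a i • x i)‖ ≤ ∑ i ∈ Finset.range n, |a i| * ‖T (x i)‖ := by
        simpa [norm_smul] using norm_sum_le (Finset.range n) fun i ↦ a i • T (x i)
    _ ≤ ∑ i ∈ Finset.range n, (4 * s) * (ε * (1 / 2) ^ (i + 3)) := by
        gcongr with i hi
        · exact hx.abs_le_four_mul hx1 a (Finset.mem_range.mp hi)
        · exact hT i
    _ = ε * s / 2 * ∑ i ∈ Finset.range n, (1 / 2 : ℝ) ^ i := by
        rw [Finset.mul_sum]; congr 1 with i; ring
    _ ≤ ε * s / 2 * 2 := by gcongr; exact sum_geometric_two_le n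
    _ = ε * s := by ring

theorem IsMazurSequence.linearIndependent {x : ℕ → E}
    (hx : IsMazurSequence (fun n ↦ (1 / 2) ^ (n + 2)) x) (hx1 : ∀ n, ‖x n‖ = 1) :
    LinearIndependent ℝ x := by
  rw [linearIndependent_iff]
  intro c hc
  ext m
  obtain ⟨n, hn⟩ := (insert m c.support).exists_nat_subset_range
  have hsum : ∑ i ∈ Finset.range n, c i • x i = 0 := by
    rw [← hc, Finsupp.linearCombination_apply,
      Finsupp.sum_of_support_subset c ((Finset.subset_insert _ _).trans hn) (fun i a ↦ a • x i)
        fun _ _ ↦ zero_smul ℝ _]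
  have := hx.abs_le_four_mul hx1 c (Finset.mem_range.mp (hn (Finset.mem_insert_self _ _)))
  rw [hsum, norm_zero, mul_zero] at this
  simpa using this

def IsBoundedBelowOn (T : E →L[ℝ] F) (N : Submodule ℝ E) : Prop :=
  ∃ c, 0 < c ∧ ∀ x ∈ N, c * ‖x‖ ≤ ‖T x‖

theorem exists_norm_eq_one_norm_apply_le_of_not_isBoundedBelowOn {T : E →L[ℝ] F}
    {N : Submodule ℝ E} (hT : ¬IsBoundedBelowOn T N) {η : ℝ} (hη : 0 < η) :
    ∃ x ∈ N, ‖x‖ = 1 ∧ ‖T x‖ ≤ η := by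
  simp only [IsBoundedBelowOn, not_exists, not_and, not_forall, not_le] at hT
  obtain ⟨x, hxN, hx⟩ := hT η hη
  have hx0 : 0 < ‖x‖ := norm_pos_iff.mpr (by rintro rfl; simp at hx)
  refine ⟨‖x‖⁻¹ • x, N.smul_mem _ hxN, by simp [norm_smul, hx0.ne'], ?_⟩
  rw [map_smul, norm_smul, norm_inv, norm_norm, inv_mul_le_iff₀ hx0]
  linarith

theorem exists_seq_mem_norm_apply_le {T : E →L[ℝ] F} {M : Submodule ℝ E}
    (hMc : IsClosed (M : Set E)) (hM : ¬FiniteDimensional ℝ M)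
    (hT : ∀ N ≤ M, IsClosed (N : Set E) → ¬FiniteDimensional ℝ N → ¬IsBoundedBelowOn T N)
    {η δ : ℕ → ℝ} (hη : ∀ n, 0 < η n) (hδ : ∀ n, 0 < δ n) :
    ∃ x : ℕ → E, (∀ n, x n ∈ M ∧ ‖x n‖ = 1 ∧ ‖T (x n)‖ ≤ η n) ∧ IsMazurSequence δ x := by
  have hnext (n : ℕ) (s : Set E) : ∃ y, s.Finite → (y ∈ M ∧ ‖y‖ = 1 ∧ ‖T y‖ ≤ η n) ∧
      ∀ f ∈ span ℝ s, ∀ t : ℝ, (1 - δ n) * ‖f‖ ≤ ‖f + t • y‖ := by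
    by_cases hs : s.Finite
    · have := FiniteDimensional.span_of_finite ℝ hs
      obtain ⟨W, hWM, hWc, hW, hWs⟩ :=
        exists_le_forall_mul_norm_le_norm_add (span ℝ s) hMc hM (hδ n)
      obtain ⟨y, hyW, hy1, hTy⟩ :=
        exists_norm_eq_one_norm_apply_le_of_not_isBoundedBelowOn (hT W hWM hWc hW) (hη n)
      exact ⟨y, fun _ ↦ ⟨⟨hWM hyW, hy1, hTy⟩, fun f hf t ↦ hWs _ (W.smul_mem t hyW) f hf⟩⟩
    · exact ⟨0, fun h ↦ absurd h hs⟩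
  choose next hnext using hnext
  have hx (n : ℕ) := seqOfPrefix_eq next n ▸ hnext n _ ((finite_Iio n).image _)
  exact ⟨seqOfPrefix next, fun n ↦ (hx n).1, fun n ↦ (hx n).2⟩

theorem exists_le_forall_norm_apply_le_mul (T : E →L[ℝ] F) {M : Submodule ℝ E}
    (hMc : IsClosed (M : Set E)) (hM : ¬FiniteDimensional ℝ M)
    (hT : ∀ N ≤ M, IsClosed (N : Set E) → ¬FiniteDimensional ℝ N → ¬IsBoundedBelowOn T N)
    {ε : ℝ} (hε : 0 < ε) :
    ∃ N ≤ M, IsClosed (N : Set E) ∧ ¬FiniteDimensional ℝ N ∧ ∀ y ∈ N, ‖T y‖ ≤ ε * ‖y‖ := by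
  -- basis constant `2` bounds the coefficients of `y` by `4 ‖y‖`, and `4 ∑ ε 2⁻ⁿ⁻³ ≤ ε`
  obtain ⟨x, hxM, hx⟩ := exists_seq_mem_norm_apply_le hMc hM hT
    (η := fun n ↦ ε * (1 / 2) ^ (n + 3)) (δ := fun n ↦ (1 / 2) ^ (n + 2))
    (fun n ↦ by positivity) (fun n ↦ by positivity)
  have hspanM : span ℝ (range x) ≤ M := span_le.mpr (range_subset_iff.mpr fun n ↦ (hxM n).1)
  have hspan : ∀ y ∈ span ℝ (range x), ‖T y‖ ≤ ε * ‖y‖ := by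
    intro y hy
    obtain ⟨a, n, rfl⟩ := exists_eq_sum_range_of_mem_span_range hy
    exact hx.norm_apply_sum_range_le (fun n ↦ (hxM n).2.1) (fun n ↦ (hxM n).2.2) a n
  refine ⟨(span ℝ (range x)).topologicalClosure, topologicalClosure_minimal _ hspanM hMc,
    isClosed_topologicalClosure _, fun h ↦ ?_, fun y hy ↦ ?_⟩
  · have := finiteDimensional_of_le (le_topologicalClosure (span ℝ (range x)))
    exact Module.Finite.not_linearIndependent_of_infinite _
      (linearIndependent_span (hx.linearIndependent fun n ↦ (hxM n).2.1))
  · exact closure_minimal hspan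
      (isClosed_le T.continuous.norm (continuous_const.mul continuous_norm)) hy

namespace IsBoundedBelowOn

variable {T : E →L[ℝ] F} {N : Submodule ℝ E}

theorem inf_ker_eq_bot (hT : IsBoundedBelowOn T N) :
    N ⊓ LinearMap.ker (T : E →ₗ[ℝ] F) = ⊥ := by
  obtain ⟨c, hc, hcN⟩ := hT
  refine eq_bot_iff.mpr fun x ⟨hxN, hx⟩ ↦ ?_
  have := hcN x hxN
  rw [show T x = 0 from hx, norm_zero] at this
  exact norm_le_zero_iff.mp (nonpos_of_mul_nonpos_right this hc)

theorem not_finiteDimensional_map (hT : IsBoundedBelowOn T N) (hN : ¬FiniteDimensional ℝ N) :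
    ¬FiniteDimensional ℝ (N.map (T : E →ₗ[ℝ] F)) := by
  intro _
  have : FiniteDimensional ℝ (N ⊓ LinearMap.ker (T : E →ₗ[ℝ] F) : Submodule ℝ E) := by
    rw [hT.inf_ker_eq_bot]; infer_instance
  exact hN (N.finiteDimensional_of_map_of_inf_ker (T : E →ₗ[ℝ] F))

theorem isClosed_map [CompleteSpace E] (hT : IsBoundedBelowOn T N) (hN : IsClosed (N : Set E)) :
    IsClosed (N.map (T : E →ₗ[ℝ] F) : Set F) := by
  obtain ⟨c, hc, hcN⟩ := hT
  have : CompleteSpace N := hN.completeSpace_coe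
  have hanti : AntilipschitzWith ⟨c⁻¹, by positivity⟩ (T.comp N.subtypeL) :=
    ContinuousLinearMap.antilipschitz_of_bound _ fun x ↦ (le_inv_mul_iff₀ hc).mpr (hcN x x.2)
  convert hanti.isClosed_range (T.comp N.subtypeL).uniformContinuous using 1
  ext; simp

theorem exists_closedComplemented_le [CompleteSpace E] (hT : IsBoundedBelowOn T N)
    (hF : Subprojective F) (hNc : IsClosed (N : Set E)) (hN : ¬FiniteDimensional ℝ N) :
    ∃ K ≤ N, IsClosed (K : Set E) ∧ ¬FiniteDimensional ℝ K ∧ K.ClosedComplemented := by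
  obtain ⟨N', hN'le, hN'c, hN', π, hπ⟩ :=
    hF _ (hT.isClosed_map hNc) (hT.not_finiteDimensional_map hN)
  set K := N ⊓ N'.comap (T : E →ₗ[ℝ] F)
  -- `T` maps `K` isomorphically onto `N'`, so the projection onto `N'` pulls back to `K`
  let e₀ : K →ₗ[ℝ] N' := (T.toLinearMap ∘ₗ K.subtype).codRestrict N' fun k ↦ k.2.2
  have he₀ : Function.Bijective e₀ := by
    refine ⟨(injective_iff_map_eq_zero e₀).mpr fun k hk ↦ ?_, fun v ↦ ?_⟩
    · have : (k : E) ∈ N ⊓ LinearMap.ker (T : E →ₗ[ℝ] F) :=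
        ⟨k.2.1, LinearMap.mem_ker.mpr (congrArg Subtype.val hk)⟩
      rw [hT.inf_ker_eq_bot, mem_bot] at this
      exact Subtype.ext this
    · obtain ⟨x, hxN, hx⟩ := hN'le v.2
      exact ⟨⟨x, hxN, show T x ∈ N' from (hx : T x = v) ▸ v.2⟩, Subtype.ext hx⟩
  let e := LinearEquiv.ofBijective e₀ he₀
  obtain ⟨c, hc, hcN⟩ := hT
  have he_symm (v : N') : ‖e.symm v‖ ≤ c⁻¹ * ‖v‖ := by
    have : T (e.symm v) = v := congrArg Subtype.val (e.apply_symm_apply v)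
    rw [le_inv_mul_iff₀ hc]
    simpa [this] using hcN _ (e.symm v).2.1
  refine ⟨K, inf_le_left, hNc.inter (hN'c.preimage T.continuous),
    fun _ ↦ hN' e.finiteDimensional,
    (e.symm.toLinearMap.mkContinuous c⁻¹ he_symm).comp (π.comp T), fun k ↦ ?_⟩
  have : π (T k) = e k := hπ ⟨T k, k.2.2⟩
  simp [this]

end IsBoundedBelowOn

theorem isBoundedBelowOn_fst_of_forall_norm_snd_le {N : Submodule ℝ (E × F)} {ε : ℝ}
    (hε : ε < 1) (h : ∀ z ∈ N, ‖z.2‖ ≤ ε * ‖z‖) :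
    IsBoundedBelowOn (ContinuousLinearMap.fst ℝ E F) N := by
  refine ⟨1 - ε, by linarith, fun z hz ↦ ?_⟩
  have : ‖z‖ ≤ ‖z.1‖ + ‖z.2‖ := norm_prod_le_iff.mpr
    ⟨le_add_of_nonneg_right (norm_nonneg _), le_add_of_nonneg_left (norm_nonneg _)⟩
  have := h z hz
  simp only [ContinuousLinearMap.coe_fst']
  linarith

end

/-- the direct sum of two subprojective Banach spaces is subprojective. -/
theorem stmt16 {X Y : Type*} [NormedAddCommGroup X] [NormedSpace ℝ X] [CompleteSpace X]
    [NormedAddCommGroup Y] [NormedSpace ℝ Y] [CompleteSpace Y]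
    (hX : Subprojective X) (hY : Subprojective Y) :
    Subprojective (X × Y) := by
  intro M hMc hM
  by_cases h : ∃ N ≤ M, IsClosed (N : Set (X × Y)) ∧ ¬FiniteDimensional ℝ N ∧
      IsBoundedBelowOn (ContinuousLinearMap.snd ℝ X Y) N
  · obtain ⟨N, hNM, hNc, hN, hsnd⟩ := h
    obtain ⟨K, hKN, hK⟩ := hsnd.exists_closedComplemented_le hY hNc hN
    exact ⟨K, hKN.trans hNM, hK⟩
  · push Not at h
    obtain ⟨N, hNM, hNc, hN, hsnd⟩ :=
      exists_le_forall_norm_apply_le_mul _ hMc hM h (ε := 1 / 2) (by norm_num)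
    obtain ⟨K, hKN, hK⟩ := (isBoundedBelowOn_fst_of_forall_norm_snd_le (by norm_num) hsnd
      ).exists_closedComplemented_le hX hNc hN
    exact ⟨K, hKN.trans hNM, hK⟩
end
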